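/- Let G be a Banach space such that G and G* are both of cotype 2, every finite-rank operator T : G → G factors through ℓ₂ with inf‖u₁‖‖u₂‖ ≤ C‖T‖ over factorizations T = u₂∘u₁ (u₁ : G → ℓ₂, u₂ : ℓ₂ → G), every operator G → ℓ₂ and every operator G* → ℓ₂ is 2-absolutely summing with π₂ ≤ C′‖·‖. Then every finite-rank operator T : G → G satisfies π₂(T) ≤ C·C′‖T‖, and if T fixes a subspace A of dimension n (T|_A = id_A), then ‖T‖ ≥ (1/(C·C′))·√n. -/

import Mathlib

open scoped BigOperators

/-- The `n`-th Rademacher function `rₙ(t) = sign(sin(2^{n+1} π t))`,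
realized as `(-1)^⌊2^{n+1} t⌋`. -/
noncomputable def rademacher (n : ℕ) (t : ℝ) : ℝ :=
  (-1 : ℝ) ^ ⌊(2 : ℝ) ^ (n + 1) * t⌋

/-- `X` has cotype 2 with constant `C`:
`(Σ‖xₙ‖²)^{1/2} ≤ C ∫₀¹ ‖Σ rₙ(t) xₙ‖ dt` for all finite families. -/
noncomputable def HasCotype2With (X : Type) [NormedAddCommGroup X] [NormedSpace ℝ X]
    (C : ℝ) : Prop :=
  ∀ (n : ℕ) (x : Fin n → X),
    (∑ i, ‖x i‖ ^ (2 : ℝ)) ^ ((2 : ℝ)⁻¹) ≤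
      C * ∫ t in (0 : ℝ)..1, ‖∑ i, rademacher i.1 t • x i‖

/-- `u` is `p`-absolutely summing with constant `lam`:
`(Σ‖u xᵢ‖^p)^{1/p} ≤ lam · sup_{‖f‖≤1} (Σ|f(xᵢ)|^p)^{1/p}` for all finite families. -/
noncomputable def IsPSummingWith {X Y : Type}
    [NormedAddCommGroup X] [NormedSpace ℝ X] [NormedAddCommGroup Y] [NormedSpace ℝ Y]
    (p : ℝ) (u : X →L[ℝ] Y) (lam : ℝ) : Prop :=
  ∀ (n : ℕ) (x : Fin n → X),
    (∑ i, ‖u (x i)‖ ^ p) ^ p⁻¹ ≤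
      lam * sSup {r : ℝ | ∃ f : X →L[ℝ] ℝ, ‖f‖ ≤ 1 ∧ r = (∑ i, |f (x i)| ^ p) ^ p⁻¹}

/-- The `p`-absolutely summing norm `π_p(u)`. -/
noncomputable def piNorm {X Y : Type}
    [NormedAddCommGroup X] [NormedSpace ℝ X] [NormedAddCommGroup Y] [NormedSpace ℝ Y]
    (p : ℝ) (u : X →L[ℝ] Y) : ℝ :=
  sInf {lam : ℝ | 0 ≤ lam ∧ IsPSummingWith p u lam}

/-- The nuclear norm `ν₁(u) = inf {Σ‖fₙ‖‖yₙ‖ : u(x) = Σ fₙ(x) yₙ}`. -/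
noncomputable def nu1 {X Y : Type}
    [NormedAddCommGroup X] [NormedSpace ℝ X] [NormedAddCommGroup Y] [NormedSpace ℝ Y]
    (u : X →L[ℝ] Y) : ℝ :=
  sInf {r : ℝ | ∃ (f : ℕ → (X →L[ℝ] ℝ)) (y : ℕ → Y),
    Summable (fun n => ‖f n‖ * ‖y n‖) ∧
    (∀ x, HasSum (fun n => f n x • y n) (u x)) ∧
    r = ∑' n, ‖f n‖ * ‖y n‖}

/-- `u : X → Y` factors through an `L₁(μ)`-space with factorization constant `≤ r`:
there are a measure `μ` and operators `v : X → L₁(μ)`, `w : L₁(μ) → Y**` with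
`k_Y ∘ u = w ∘ v` and `‖v‖‖w‖ ≤ r`. -/
def L1FactorableWith {X Y : Type}
    [NormedAddCommGroup X] [NormedSpace ℝ X] [NormedAddCommGroup Y] [NormedSpace ℝ Y]
    (u : X →L[ℝ] Y) (r : ℝ) : Prop :=
  ∃ (Ω : Type) (_ : MeasurableSpace Ω) (μ : MeasureTheory.Measure Ω)
    (v : X →L[ℝ] MeasureTheory.Lp ℝ 1 μ)
    (w : MeasureTheory.Lp ℝ 1 μ →L[ℝ] StrongDual ℝ (StrongDual ℝ Y)),
    (∀ x, w (v x) = NormedSpace.inclusionInDoubleDual ℝ Y (u x)) ∧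
      ‖v‖ * @norm _ (@ContinuousLinearMap.hasOpNorm ℝ ℝ (MeasureTheory.Lp ℝ 1 μ)
        (StrongDual ℝ (StrongDual ℝ Y)) _ _ _ _ _ _ (RingHom.id ℝ)) w ≤ r

/-- `u` is `L₁`-factorable. -/
def L1Factorable {X Y : Type}
    [NormedAddCommGroup X] [NormedSpace ℝ X] [NormedAddCommGroup Y] [NormedSpace ℝ Y]
    (u : X →L[ℝ] Y) : Prop :=
  ∃ r : ℝ, L1FactorableWith u r


lemma aux_rpow_sq_inv (c : ℝ) (hc : 0 ≤ c) : (c ^ (2:ℝ)) ^ ((2:ℝ)⁻¹) = c := by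
  rw [← Real.rpow_mul hc]
  norm_num

lemma aux_rpow_half_le {m : ℕ} (s t : Fin m → ℝ) (c : ℝ) (hc : 0 ≤ c)
    (hs : ∀ i, 0 ≤ s i) (ht : ∀ i, 0 ≤ t i) (h : ∀ i, s i ≤ c * t i) :
    (∑ i, s i ^ (2:ℝ)) ^ ((2:ℝ)⁻¹) ≤ c * (∑ i, t i ^ (2:ℝ)) ^ ((2:ℝ)⁻¹) := by
  have h1 : ∑ i, s i ^ (2:ℝ) ≤ c ^ (2:ℝ) * ∑ i, t i ^ (2:ℝ) := by
    rw [Finset.mul_sum]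
    refine Finset.sum_le_sum fun i _ => ?_
    calc s i ^ (2:ℝ) ≤ (c * t i) ^ (2:ℝ) :=
          Real.rpow_le_rpow (hs i) (h i) (by norm_num)
      _ = c ^ (2:ℝ) * t i ^ (2:ℝ) := Real.mul_rpow hc (ht i)
  calc (∑ i, s i ^ (2:ℝ)) ^ ((2:ℝ)⁻¹)
      ≤ (c ^ (2:ℝ) * ∑ i, t i ^ (2:ℝ)) ^ ((2:ℝ)⁻¹) := by
        refine Real.rpow_le_rpow ?_ h1 (by norm_num)
        exact Finset.sum_nonneg fun i _ => Real.rpow_nonneg (hs i) _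
    _ = c * (∑ i, t i ^ (2:ℝ)) ^ ((2:ℝ)⁻¹) := by
        rw [Real.mul_rpow (Real.rpow_nonneg hc _)
          (Finset.sum_nonneg fun i _ => Real.rpow_nonneg (ht i) _), aux_rpow_sq_inv c hc]


/-- **Finite-rank operators fixing a subspace have large norm.**
Let `G` be a Banach space such that `G` and `G*` are both of cotype 2, every finite-rank
operator `T : G → G` factors through `ℓ₂` with `inf ‖u₁‖‖u₂‖ ≤ C‖T‖`, and every operator
from `G` (and from `G*`) to `ℓ₂` is 2-absolutely summing with `π₂ ≤ C′‖·‖`.  Then every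
finite-rank `T : G → G` satisfies `π₂(T) ≤ C·C′‖T‖`, and if `T` restricts to the identity
on a subspace `A` of dimension `n`, then `‖T‖ ≥ (1/(C·C′))·√n`. -/
theorem norm_of_finite_rank_operator_fixing_subspace
    (G : Type) [NormedAddCommGroup G] [NormedSpace ℝ G] [CompleteSpace G]
    (C C' : ℝ) (hC : 0 < C) (hC' : 0 < C')
    (hcot : ∃ C₂ : ℝ, HasCotype2With G C₂)
    (hcotDual : ∃ C₂ : ℝ, HasCotype2With (StrongDual ℝ G) C₂)
    (hfact : ∀ T : G →L[ℝ] G, FiniteDimensional ℝ (LinearMap.range (T : G →ₗ[ℝ] G)) →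
      ∃ (u₁ : G →L[ℝ] lp (fun _ : ℕ => ℝ) 2) (u₂ : lp (fun _ : ℕ => ℝ) 2 →L[ℝ] G),
        T = u₂.comp u₁ ∧ ‖u₁‖ * ‖u₂‖ ≤ C * ‖T‖)
    (hsum : ∀ v : G →L[ℝ] lp (fun _ : ℕ => ℝ) 2, IsPSummingWith 2 v (C' * ‖v‖))
    (hsumDual : ∀ v : StrongDual ℝ G →L[ℝ] lp (fun _ : ℕ => ℝ) 2,
      IsPSummingWith 2 v (C' * ‖v‖)) :
    (∀ T : G →L[ℝ] G, FiniteDimensional ℝ (LinearMap.range (T : G →ₗ[ℝ] G)) →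
      IsPSummingWith 2 T (C * C' * ‖T‖) ∧ piNorm 2 T ≤ C * C' * ‖T‖) ∧
    (∀ T : G →L[ℝ] G, FiniteDimensional ℝ (LinearMap.range (T : G →ₗ[ℝ] G)) →
      ∀ (A : Submodule ℝ G) (n : ℕ), Module.finrank ℝ A = n → (∀ a ∈ A, T a = a) →
        (1 / (C * C')) * Real.sqrt n ≤ ‖T‖) := by

  have part1 : ∀ T : G →L[ℝ] G, FiniteDimensional ℝ (LinearMap.range (T : G →ₗ[ℝ] G)) →
      IsPSummingWith 2 T (C * C' * ‖T‖) ∧ piNorm 2 T ≤ C * C' * ‖T‖ := by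
    intro T hT
    obtain ⟨u₁, u₂, hTe, hprod⟩ := hfact T hT
    have hTx : ∀ x : G, T x = u₂ (u₁ x) := by intro x; rw [hTe]; rfl
    have hps : IsPSummingWith 2 T (C * C' * ‖T‖) := by
      intro m x
      have key := hsum u₁ m x
      set S := sSup {r : ℝ | ∃ f : G →L[ℝ] ℝ, ‖f‖ ≤ 1 ∧
          r = (∑ i : Fin m, |f (x i)| ^ (2:ℝ)) ^ (2:ℝ)⁻¹} with hS
      have hS0 : 0 ≤ S := by
        apply Real.sSup_nonneg
        rintro r ⟨f, hf, rfl⟩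
        exact Real.rpow_nonneg
          (Finset.sum_nonneg fun i _ => Real.rpow_nonneg (abs_nonneg _) _) _
      have step : (∑ i : Fin m, ‖T (x i)‖ ^ (2:ℝ)) ^ ((2:ℝ)⁻¹) ≤
          ‖u₂‖ * (∑ i : Fin m, ‖u₁ (x i)‖ ^ (2:ℝ)) ^ ((2:ℝ)⁻¹) := by
        refine aux_rpow_half_le _ _ _ (norm_nonneg _) (fun i => norm_nonneg _)
          (fun i => norm_nonneg _) (fun i => ?_)
        rw [hTx]
        exact u₂.le_opNorm _
      calc (∑ i : Fin m, ‖T (x i)‖ ^ (2:ℝ)) ^ ((2:ℝ)⁻¹)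
          ≤ ‖u₂‖ * (∑ i : Fin m, ‖u₁ (x i)‖ ^ (2:ℝ)) ^ ((2:ℝ)⁻¹) := step
        _ ≤ ‖u₂‖ * ((C' * ‖u₁‖) * S) :=
            mul_le_mul_of_nonneg_left key (norm_nonneg _)
        _ = (C' * (‖u₁‖ * ‖u₂‖)) * S := by ring
        _ ≤ (C' * (C * ‖T‖)) * S := by
            refine mul_le_mul_of_nonneg_right ?_ hS0
            exact mul_le_mul_of_nonneg_left hprod hC'.le
        _ = C * C' * ‖T‖ * S := by ring
    refine ⟨hps, ?_⟩
    refine csInf_le ⟨0, fun lam hlam => hlam.1⟩ ⟨by positivity, hps⟩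
  refine ⟨part1, ?_⟩
  intro T hT A n hA hfix
  obtain ⟨u₁, u₂, hTe, hprod⟩ := hfact T hT
  have hTx : ∀ x : G, T x = u₂ (u₁ x) := by intro x; rw [hTe]; rfl
  have hAle : A ≤ LinearMap.range (T : G →ₗ[ℝ] G) := fun a ha => ⟨a, hfix a ha⟩
  haveI : FiniteDimensional ℝ A := Submodule.finiteDimensional_of_le hAle
  set ℓ2 := lp (fun _ : ℕ => ℝ) 2 with hℓ2
  set φ : A →ₗ[ℝ] ℓ2 := u₁.toLinearMap.comp A.subtype with hφ
  have hφa : ∀ a : A, φ a = u₁ (a : G) := fun a => rfl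
  have hfix' : ∀ a : A, u₂ (φ a) = (a : G) := by
    intro a
    rw [hφa, ← hTx, hfix a a.2]
  have hφinj : Function.Injective φ := by
    intro a b hab
    have := congrArg u₂ hab
    rw [hfix' a, hfix' b] at this
    exact Subtype.ext this
  set H : Submodule ℝ ℓ2 := LinearMap.range φ with hH
  have hHn : Module.finrank ℝ H = n := by
    rw [hH, LinearMap.finrank_range_of_inj hφinj, hA]
  let b : OrthonormalBasis (Fin n) ℝ H :=
    (stdOrthonormalBasis ℝ H).reindex (finCongr (by rw [hHn]))
  set v : Fin n → ℓ2 := fun i => ((b i : H) : ℓ2) with hv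
  have hon : Orthonormal ℝ v := by
    rw [orthonormal_iff_ite]
    intro i j
    have := (orthonormal_iff_ite.mp b.orthonormal) i j
    simpa [hv, Submodule.coe_inner] using this
  have hmem : ∀ i, ∃ a : A, φ a = v i := fun i => (b i).2
  choose a ha using hmem
  have key := hsum u₁ n (fun i => ((a i : A) : G))
  have hLHS : (∑ i : Fin n, ‖u₁ ((a i : A) : G)‖ ^ (2:ℝ)) ^ (2:ℝ)⁻¹ = Real.sqrt n := by
    have h1 : ∀ i : Fin n, ‖u₁ ((a i : A) : G)‖ = 1 := by
      intro i
      rw [← hφa, ha i]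
      exact hon.1 i
    simp only [h1, Real.one_rpow, Finset.sum_const, Finset.card_univ, Fintype.card_fin,
      nsmul_eq_mul, mul_one]
    rw [Real.sqrt_eq_rpow, one_div]
  set S := sSup {r : ℝ | ∃ f : G →L[ℝ] ℝ, ‖f‖ ≤ 1 ∧
      r = (∑ i : Fin n, |f ((a i : A) : G)| ^ (2:ℝ)) ^ (2:ℝ)⁻¹} with hS
  have hSle : S ≤ ‖u₂‖ := by
    apply csSup_le
    · exact ⟨(∑ i : Fin n, |(0 : G →L[ℝ] ℝ) ((a i : A) : G)| ^ (2:ℝ)) ^ (2:ℝ)⁻¹,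
        0, by simp, rfl⟩
    rintro r ⟨f, hf, rfl⟩
    set g : ℓ2 →L[ℝ] ℝ := f.comp u₂ with hg
    set y : ℓ2 := (InnerProductSpace.toDual ℝ ℓ2).symm g with hy
    have hyg : ∀ z : ℓ2, (inner ℝ y z : ℝ) = g z := fun z =>
      InnerProductSpace.toDual_symm_apply
    have hyn : ‖y‖ ≤ ‖u₂‖ := by
      rw [hy, (InnerProductSpace.toDual ℝ ℓ2).symm.norm_map]
      calc ‖g‖ ≤ ‖f‖ * ‖u₂‖ := f.opNorm_comp_le u₂
        _ ≤ 1 * ‖u₂‖ := mul_le_mul_of_nonneg_right hf (norm_nonneg _)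
        _ = ‖u₂‖ := one_mul _
    have hfa : ∀ i, f ((a i : A) : G) = (inner ℝ (v i) y : ℝ) := by
      intro i
      rw [real_inner_comm, hyg, hg]
      have : ((a i : A) : G) = u₂ (v i) := by rw [← ha i, hfix' (a i)]
      rw [this]
      rfl
    have hbessel : ∑ i : Fin n, ‖(inner ℝ (v i) y : ℝ)‖ ^ 2 ≤ ‖y‖ ^ 2 :=
      hon.sum_inner_products_le y
    have h2 : ∑ i : Fin n, |f ((a i : A) : G)| ^ (2:ℝ) ≤ ‖u₂‖ ^ (2:ℝ) := by
      have hc : ∀ x : ℝ, x ^ (2:ℝ) = x ^ (2:ℕ) := by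
        intro x
        rw [show (2:ℝ) = ((2:ℕ):ℝ) by norm_num, Real.rpow_natCast]
      calc ∑ i : Fin n, |f ((a i : A) : G)| ^ (2:ℝ)
          = ∑ i : Fin n, ‖(inner ℝ (v i) y : ℝ)‖ ^ 2 := by
            refine Finset.sum_congr rfl fun i _ => ?_
            rw [hfa i, hc, Real.norm_eq_abs]
        _ ≤ ‖y‖ ^ 2 := hbessel
        _ ≤ ‖u₂‖ ^ 2 := pow_le_pow_left₀ (norm_nonneg _) hyn 2
        _ = ‖u₂‖ ^ (2:ℝ) := (hc _).symm
    calc (∑ i : Fin n, |f ((a i : A) : G)| ^ (2:ℝ)) ^ (2:ℝ)⁻¹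
        ≤ (‖u₂‖ ^ (2:ℝ)) ^ (2:ℝ)⁻¹ := by
          refine Real.rpow_le_rpow ?_ h2 (by norm_num)
          exact Finset.sum_nonneg fun i _ => Real.rpow_nonneg (abs_nonneg _) _
      _ = ‖u₂‖ := aux_rpow_sq_inv _ (norm_nonneg _)
  have hmain : Real.sqrt n ≤ C * C' * ‖T‖ := by
    calc Real.sqrt n = (∑ i : Fin n, ‖u₁ ((a i : A) : G)‖ ^ (2:ℝ)) ^ (2:ℝ)⁻¹ := hLHS.symm
      _ ≤ (C' * ‖u₁‖) * S := key
      _ ≤ (C' * ‖u₁‖) * ‖u₂‖ := mul_le_mul_of_nonneg_left hSle (by positivity)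
      _ = C' * (‖u₁‖ * ‖u₂‖) := by ring
      _ ≤ C' * (C * ‖T‖) := mul_le_mul_of_nonneg_left hprod hC'.le
      _ = C * C' * ‖T‖ := by ring
  rw [div_mul_eq_mul_div, one_mul, div_le_iff₀ (by positivity)]
  calc Real.sqrt n ≤ C * C' * ‖T‖ := hmain
    _ = ‖T‖ * (C * C') := by ring
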